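/- With f_{y,a}(z) = ∑_{n≥0} C(y-a(n-1),n) z^n and g_{y,a} as above, one has f_{y,a} = (g_{1,a})^y · f_{0,a} as formal power series in z, for all rational y and a. -/

import Mathlib

open PowerSeries Finset

/-- Generalized binomial coefficient `C(x,n) = x(x-1)⋯(x-n+1)/n!`. -/
noncomputable def gchoose (x : ℚ) (n : ℕ) : ℚ :=
  (∏ i ∈ Finset.range n, (x - i)) / n.factorial

/-- `g_{y,a}(z) = ∑_{n≥0} (y/(y-an)) C(y-an,n) z^n`, with the `n`-th coefficient
interpreted as `y·C(y-an-1,n-1)/n` for `n ≥ 1` and constant term `1`. -/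
noncomputable def gSeries (y a : ℚ) : PowerSeries ℚ :=
  PowerSeries.mk fun n =>
    if n = 0 then 1 else y * gchoose (y - a * (n : ℚ) - 1) (n - 1) / (n : ℚ)

/-- The binomial-series power `(1+w)^y := ∑_k C(y,k) w^k` of `1 + w`, for `w` a power
series with zero constant term (the coefficient of `z^n` in `w^k` vanishes for `k > n`,
so each coefficient is the indicated finite sum). -/
noncomputable def binPow (w : PowerSeries ℚ) (y : ℚ) : PowerSeries ℚ :=
  PowerSeries.mk fun n =>
    ∑ k ∈ Finset.range (n + 1), gchoose y k * PowerSeries.coeff n (w ^ k)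

/-! Write `f_y = f_{y,a}` and `g_x = g_{x,a}`. Pascal's rule gives `f_{y+1} = f_y + z f_{y-a}`, and
absorption gives `g_x = f_{x-a} + a z f_{x-2a-1}`, hence also `g_{x+1} = g_x + z g_{x-a}` and
`g_0 = 1`. So `S_x = g_x f_y - f_{x+y}` satisfies `S_{x+1} = S_x + z S_{x-a}` and `S_0 = 0`. Every
coefficient of `S_x` is a polynomial in `x`; by induction on its index it is `1`-periodic, hence
constant, hence zero. This Hagen–Rothe convolution `g_x f_y = f_{x+y}` gives `g_1^m f_0 = f_m` for
`m ∈ ℕ`, where the binomial series is `(1 + (g_1 - 1))^m = g_1^m`; both sides of the claim have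
coefficients polynomial in `y`, so it holds for every `y`. -/

@[fun_prop]
def IsPolynomialMap {R : Type*} [CommRing R] (f : R → R) : Prop :=
  ∃ p : Polynomial R, ∀ x, p.eval x = f x

namespace IsPolynomialMap

section CommRing

variable {R : Type*} [CommRing R] {f g : R → R}

@[fun_prop]
lemma id : IsPolynomialMap fun x : R => x :=
  ⟨Polynomial.X, fun _ => Polynomial.eval_X⟩

@[fun_prop]
lemma const (c : R) : IsPolynomialMap fun _ : R => c :=
  ⟨Polynomial.C c, fun _ => Polynomial.eval_C⟩

@[fun_prop]
lemma comp (hf : IsPolynomialMap f) (hg : IsPolynomialMap g) :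
    IsPolynomialMap fun x => f (g x) := by
  obtain ⟨p, hp⟩ := hf
  obtain ⟨q, hq⟩ := hg
  exact ⟨p.comp q, fun x => by rw [Polynomial.eval_comp, hq, hp]⟩

@[fun_prop]
lemma add (hf : IsPolynomialMap f) (hg : IsPolynomialMap g) :
    IsPolynomialMap fun x => f x + g x := by
  obtain ⟨p, hp⟩ := hf
  obtain ⟨q, hq⟩ := hg
  exact ⟨p + q, fun x => by simp [hp, hq]⟩

@[fun_prop]
lemma sub (hf : IsPolynomialMap f) (hg : IsPolynomialMap g) :
    IsPolynomialMap fun x => f x - g x := by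
  obtain ⟨p, hp⟩ := hf
  obtain ⟨q, hq⟩ := hg
  exact ⟨p - q, fun x => by simp [hp, hq]⟩

@[fun_prop]
lemma mul (hf : IsPolynomialMap f) (hg : IsPolynomialMap g) :
    IsPolynomialMap fun x => f x * g x := by
  obtain ⟨p, hp⟩ := hf
  obtain ⟨q, hq⟩ := hg
  exact ⟨p * q, fun x => by simp [hp, hq]⟩

@[fun_prop]
lemma sum {ι : Type*} (s : Finset ι) {f : ι → R → R} (hf : ∀ i, IsPolynomialMap (f i)) :
    IsPolynomialMap fun x => ∑ i ∈ s, f i x := by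
  choose p hp using hf
  exact ⟨∑ i ∈ s, p i, fun x => by simp [Polynomial.eval_finsetSum, hp]⟩

@[fun_prop]
lemma prod {ι : Type*} (s : Finset ι) {f : ι → R → R} (hf : ∀ i, IsPolynomialMap (f i)) :
    IsPolynomialMap fun x => ∏ i ∈ s, f i x := by
  choose p hp using hf
  exact ⟨∏ i ∈ s, p i, fun x => by simp [Polynomial.eval_prod, hp]⟩

variable [IsDomain R] [CharZero R]

lemma eq_of_forall_natCast_eq (hf : IsPolynomialMap f) (hg : IsPolynomialMap g)
    (h : ∀ m : ℕ, f m = g m) : f = g := by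
  obtain ⟨p, hp⟩ := hf.sub hg
  have hroots : p = 0 := p.eq_zero_of_infinite_isRoot <|
    Set.infinite_of_injective_forall_mem Nat.cast_injective fun m => by
      simp [hp, h m]
  funext x
  simpa [hroots, sub_eq_zero, eq_comm] using hp x

lemma eq_const_of_periodic (hf : IsPolynomialMap f) (hper : Function.Periodic f 1) :
    f = fun _ => f 0 :=
  eq_of_forall_natCast_eq hf (const _) fun m => by
    simpa using hper.nat_mul_eq m

end CommRing

@[fun_prop]
lemma div_const {K : Type*} [Field K] {f : K → K} (hf : IsPolynomialMap f) (c : K) :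
    IsPolynomialMap fun x => f x / c := by
  simp only [div_eq_mul_inv]
  fun_prop

end IsPolynomialMap

lemma gchoose_eq_ringChoose (x : ℚ) (n : ℕ) : gchoose x n = Ring.choose x n := by
  rw [Ring.choose_eq_smul, gchoose, ← Polynomial.aeval_eq_smeval, Polynomial.aeval_def,
    Polynomial.eval₂_eq_eval_map, descPochhammer_map, descPochhammer_eval_eq_prod_range,
    smul_eq_mul, div_eq_inv_mul]

lemma gchoose_zero_right (x : ℚ) : gchoose x 0 = 1 := by
  simp [gchoose]

lemma gchoose_natCast (m k : ℕ) : gchoose m k = m.choose k := by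
  rw [gchoose_eq_ringChoose, Ring.choose_natCast]

lemma gchoose_succ_succ (x : ℚ) (k : ℕ) :
    gchoose (x + 1) (k + 1) = gchoose x k + gchoose x (k + 1) := by
  simp only [gchoose_eq_ringChoose, Ring.choose_succ_succ]

lemma succ_mul_gchoose_succ (x : ℚ) (k : ℕ) :
    (k + 1) * gchoose x (k + 1) = x * gchoose (x - 1) k := by
  have := Ring.choose_smul_choose x (Nat.le_add_left 1 k)
  simpa [gchoose_eq_ringChoose, Ring.choose_one_right] using this

@[fun_prop]
lemma isPolynomialMap_gchoose (k : ℕ) : IsPolynomialMap fun x => gchoose x k := by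
  unfold gchoose
  fun_prop

def HasPolynomialCoeffs {R : Type*} [CommRing R] (S : R → PowerSeries R) : Prop :=
  ∀ n, IsPolynomialMap fun x => coeff n (S x)

namespace HasPolynomialCoeffs

variable {R : Type*} [CommRing R] {S T : R → PowerSeries R}

lemma const (F : PowerSeries R) : HasPolynomialCoeffs fun _ => F :=
  fun _ => IsPolynomialMap.const _

lemma mul (hS : HasPolynomialCoeffs S) (hT : HasPolynomialCoeffs T) :
    HasPolynomialCoeffs fun x => S x * T x := fun n => by
  simp only [coeff_mul]
  exact IsPolynomialMap.sum _ fun p => (hS p.1).mul (hT p.2)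

lemma sub (hS : HasPolynomialCoeffs S) (hT : HasPolynomialCoeffs T) :
    HasPolynomialCoeffs fun x => S x - T x := fun n => by
  simp only [map_sub]
  exact (hS n).sub (hT n)

variable [IsDomain R] [CharZero R]

lemma eq_of_forall_natCast_eq (hS : HasPolynomialCoeffs S) (hT : HasPolynomialCoeffs T)
    (h : ∀ m : ℕ, S m = T m) : S = T := by
  funext x
  ext n
  exact congrFun ((hS n).eq_of_forall_natCast_eq (hT n) fun m => by rw [h m]) x

lemma eq_zero_of_add_one_eq (hS : HasPolynomialCoeffs S) (σ : R → R)
    (hstep : ∀ x, S (x + 1) = S x + X * S (σ x)) (h0 : S 0 = 0) : S = 0 := by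
  suffices h : ∀ n x, coeff n (S x) = 0 from funext fun x => PowerSeries.ext fun n => h n x
  intro n
  induction n using Nat.strong_induction_on with
  | _ n ih =>
  have hX : ∀ z, coeff n (X * S z) = 0 := by
    rcases n with _ | m
    · simp
    · simp [coeff_succ_X_mul, ih m (by omega)]
  have hper : Function.Periodic (fun x => coeff n (S x)) 1 := fun x => by
    simp [hstep x, hX]
  intro x
  simpa [h0] using congrFun ((hS n).eq_const_of_periodic hper) x

end HasPolynomialCoeffs

noncomputable def fSeries (y a : ℚ) : PowerSeries ℚ :=
  PowerSeries.mk fun n => gchoose (y - a * ((n : ℚ) - 1)) n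

lemma hasPolynomialCoeffs_fSeries {g : ℚ → ℚ} (hg : IsPolynomialMap g) (a : ℚ) :
    HasPolynomialCoeffs fun x => fSeries (g x) a := fun n => by
  simp only [fSeries, coeff_mk]
  fun_prop

lemma fSeries_add_one (y a : ℚ) : fSeries (y + 1) a = fSeries y a + X * fSeries (y - a) a := by
  ext (_ | n)
  · simp [fSeries, gchoose_zero_right]
  · rw [map_add, coeff_succ_X_mul]
    simp only [fSeries, coeff_mk]
    push_cast
    rw [show y + 1 - a * (n + 1 - 1) = y - a * n + 1 by ring, gchoose_succ_succ,
      show y - a * (n + 1 - 1) = y - a * n by ring, show y - a - a * (n - 1) = y - a * n by ring,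
      add_comm]

lemma gSeries_eq_fSeries_add (x a : ℚ) :
    gSeries x a = fSeries (x - a) a + C a * X * fSeries (x - 2 * a - 1) a := by
  ext (_ | n)
  · simp [gSeries, fSeries, gchoose_zero_right]
  · rw [map_add, mul_assoc, coeff_C_mul, coeff_succ_X_mul]
    simp only [gSeries, fSeries, coeff_mk]
    push_cast
    simp only [add_tsub_cancel_right]
    obtain ⟨t, rfl⟩ : ∃ t, x = t + a * (n + 1) := ⟨x - a * (n + 1), by ring⟩
    rw [show t + a * (n + 1) - a * (n + 1) - 1 = t - 1 by ring,
      show t + a * (n + 1) - a - a * n = t by ring,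
      show t + a * (n + 1) - 2 * a - 1 - a * (n - 1) = t - 1 by ring]
    field_simp
    linear_combination -succ_mul_gchoose_succ t n

lemma hasPolynomialCoeffs_gSeries (a : ℚ) : HasPolynomialCoeffs fun x => gSeries x a := by
  rintro (_ | n)
  · simpa [gSeries] using IsPolynomialMap.const 1
  · simp only [gSeries, coeff_mk, if_neg n.succ_ne_zero]
    fun_prop

lemma gSeries_add_one (x a : ℚ) : gSeries (x + 1) a = gSeries x a + X * gSeries (x - a) a := by
  rw [gSeries_eq_fSeries_add, gSeries_eq_fSeries_add, gSeries_eq_fSeries_add,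
    show x + 1 - a = x - a + 1 by ring, fSeries_add_one,
    show x + 1 - 2 * a - 1 = x - 2 * a - 1 + 1 by ring, fSeries_add_one,
    show x - 2 * a - 1 - a = x - a - 2 * a - 1 by ring]
  ring

lemma gSeries_zero_left (a : ℚ) : gSeries 0 a = 1 := by
  ext (_ | n) <;> simp [gSeries, coeff_one]

lemma gSeries_mul_fSeries (x y a : ℚ) : gSeries x a * fSeries y a = fSeries (x + y) a := by
  let S := fun x => gSeries x a * fSeries y a - fSeries (x + y) a
  have hS : HasPolynomialCoeffs S :=
    ((hasPolynomialCoeffs_gSeries a).mul (.const _)).sub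
      (hasPolynomialCoeffs_fSeries (by fun_prop) a)
  have hstep : ∀ x, S (x + 1) = S x + X * S (x - a) := fun x => by
    simp only [S]
    rw [gSeries_add_one, show x + 1 + y = x + y + 1 by ring, fSeries_add_one,
      show x + y - a = x - a + y by ring]
    ring
  have h0 : S 0 = 0 := by simp [S, gSeries_zero_left]
  exact sub_eq_zero.1 (congrFun (hS.eq_zero_of_add_one_eq _ hstep h0) x)

lemma binPow_natCast {w : PowerSeries ℚ} (hw : constantCoeff w = 0) (m : ℕ) :
    binPow w m = (1 + w) ^ m := by
  ext n
  have hvanish : ∀ k, n < k → coeff n (w ^ k) = 0 := fun k hk =>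
    X_pow_dvd_iff.1 (pow_dvd_pow_of_dvd (X_dvd_iff.2 hw) k) n hk
  rw [add_comm, add_pow]
  simp only [one_pow, mul_one, map_sum, binPow, coeff_mk, gchoose_natCast,
    ← map_natCast (C (R := ℚ)), coeff_mul_C, mul_comm (coeff n _)]
  calc ∑ k ∈ range (n + 1), (m.choose k : ℚ) * coeff n (w ^ k)
      = ∑ k ∈ range (n + m + 1), (m.choose k : ℚ) * coeff n (w ^ k) :=
        sum_subset (range_subset_range.2 (by omega)) fun k hk hk' => by
          simp [hvanish k (by simp at hk hk'; omega)]
    _ = ∑ k ∈ range (m + 1), (m.choose k : ℚ) * coeff n (w ^ k) :=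
        (sum_subset (range_subset_range.2 (by omega)) fun k hk hk' => by
          simp [Nat.choose_eq_zero_of_lt (by simp at hk hk'; omega : m < k)]).symm

lemma hasPolynomialCoeffs_binPow (w : PowerSeries ℚ) : HasPolynomialCoeffs (binPow w) :=
  fun n => by
    simp only [binPow, coeff_mk]
    fun_prop

lemma gSeries_one_pow_mul_fSeries (a y : ℚ) (m : ℕ) :
    gSeries 1 a ^ m * fSeries y a = fSeries (m + y) a := by
  induction m with
  | zero => simp
  | succ m ih =>
    rw [pow_succ', mul_assoc, ih, gSeries_mul_fSeries]
    congr 1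
    push_cast
    ring

lemma binPow_gSeries_mul_fSeries (y a : ℚ) :
    binPow (gSeries 1 a - 1) y * fSeries 0 a = fSeries y a := by
  have hw : constantCoeff (gSeries 1 a - 1) = 0 := by
    rw [map_sub, ← coeff_zero_eq_constantCoeff_apply]
    simp [gSeries]
  refine congrFun (HasPolynomialCoeffs.eq_of_forall_natCast_eq (S := fun y => _ * _)
    ((hasPolynomialCoeffs_binPow _).mul (.const _)) (hasPolynomialCoeffs_fSeries .id a)
    fun m => ?_) y
  rw [binPow_natCast hw, add_sub_cancel, gSeries_one_pow_mul_fSeries, add_zero]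

/-- `f_{y,a} = (g_{1,a})^y · f_{0,a}` as formal power series in `z`, where
`f_{y,a}(z) = ∑_{n≥0} C(y-a(n-1),n) z^n` and the rational power is the binomial series. -/
theorem stmt5 (y a : ℚ) :
    PowerSeries.mk (fun n => gchoose (y - a * ((n : ℚ) - 1)) n) =
      binPow (gSeries 1 a - 1) y * PowerSeries.mk (fun n => gchoose (-a * ((n : ℚ) - 1)) n) := by
  have hf0 : PowerSeries.mk (fun n => gchoose (-a * ((n : ℚ) - 1)) n) = fSeries 0 a := by
    simp [fSeries, neg_mul]
  show fSeries y a = _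
  rw [hf0, binPow_gSeries_mul_fSeries]
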